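/- arXiv:1801.01088 — 2 statements merged into one kernel-verified Lean document; each statement's English description precedes it below -/
import Mathlib

section
/- Baillon–Haddad theorem: Let F : H → ℝ be convex and differentiable with ∇F being (1/β)-Lipschitz continuous for some β > 0. Then β∇F is firmly nonexpansive; in particular ⟨∇F(x) - ∇F(y), x - y⟩ ≥ β‖∇F(x) - ∇F(y)‖² for all x, y. -/
/-!
The descent lemma `F (x + v) ≤ F x + ⟪∇F x, v⟫ + ‖v‖² / (2β)` and the supporting-hyperplane
inequality of `F` at `y`, both evaluated at the point `x - β (∇F x - ∇F y)`, give
`F y + ⟪∇F y, x - y⟫ + β/2 ‖∇F x - ∇F y‖² ≤ F x`. Adding this to the same inequality with `x` and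
`y` exchanged yields co-coercivity `β ‖∇F x - ∇F y‖² ≤ ⟪∇F x - ∇F y, x - y⟫`, which for
`T = β ∇F` says `‖T x - T y‖² ≤ ⟪T x - T y, x - y⟫`, i.e. that `T` is firmly nonexpansive.
-/

open scoped RealInnerProductSpace

open Set

section Gradient

variable {H : Type*} [NormedAddCommGroup H] [InnerProductSpace ℝ H] [CompleteSpace H]
  {F : H → ℝ} {f' : H → H}

lemma HasGradientAt.hasDerivAt_comp_add_smul {g x v : H} {t : ℝ}
    (hF : HasGradientAt F g (x + t • v)) :
    HasDerivAt (fun s : ℝ => F (x + s • v)) ⟪g, v⟫ t := by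
  have hline : HasDerivAt (fun s : ℝ => x + s • v) v t :=
    ((hasDerivAt_id t).smul_const v).const_add x |>.congr_deriv (one_smul ℝ v)
  simpa [Function.comp_def] using hF.hasFDerivAt.comp_hasDerivAt t hline

lemma ConvexOn.add_inner_sub_le_of_hasGradientAt (hconv : ConvexOn ℝ univ F) {g x : H}
    (hF : HasGradientAt F g x) (z : H) :
    F x + ⟪g, z - x⟫ ≤ F z := by
  have hline : ConvexOn ℝ univ (fun t : ℝ => F (x + t • (z - x))) := by
    simpa [Function.comp_def, AffineMap.lineMap_apply, add_comm] using
      hconv.comp_affineMap (AffineMap.lineMap x z)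
  have hderiv : HasDerivAt (fun t : ℝ => F (x + t • (z - x))) ⟪g, z - x⟫ 0 :=
    HasGradientAt.hasDerivAt_comp_add_smul (by simpa using hF)
  have := hline.le_slope_of_hasDerivAt (mem_univ 0) (mem_univ 1) one_pos hderiv
  simp only [slope_def_field, one_smul, zero_smul, add_zero, add_sub_cancel, sub_zero,
    div_one] at this
  linarith

lemma apply_add_le_of_lipschitz_gradient {L : ℝ} (hF : ∀ x, HasGradientAt F (f' x) x)
    (hlip : ∀ x y, ‖f' x - f' y‖ ≤ L * ‖x - y‖) (x v : H) :
    F (x + v) ≤ F x + ⟪f' x, v⟫ + L / 2 * ‖v‖ ^ 2 := by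
  set B : ℝ → ℝ := fun t => F x + t * ⟪f' x, v⟫ + L / 2 * t ^ 2 * ‖v‖ ^ 2
  have hg (t : ℝ) : HasDerivAt (fun s : ℝ => F (x + s • v)) ⟪f' (x + t • v), v⟫ t :=
    (hF _).hasDerivAt_comp_add_smul
  have hB (t : ℝ) : HasDerivAt B (⟪f' x, v⟫ + L * t * ‖v‖ ^ 2) t := by
    have := (((hasDerivAt_id t).mul_const ⟪f' x, v⟫).const_add (F x)).add
      (((hasDerivAt_pow 2 t).const_mul (L / 2)).mul_const (‖v‖ ^ 2))
    exact this.congr_deriv (by push_cast; ring)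
  have bound (t : ℝ) (ht : 0 ≤ t) : ⟪f' (x + t • v), v⟫ ≤ ⟪f' x, v⟫ + L * t * ‖v‖ ^ 2 := by
    have : ⟪f' (x + t • v) - f' x, v⟫ ≤ L * t * ‖v‖ ^ 2 :=
      calc ⟪f' (x + t • v) - f' x, v⟫ ≤ ‖f' (x + t • v) - f' x‖ * ‖v‖ := real_inner_le_norm _ _
        _ ≤ L * ‖(x + t • v) - x‖ * ‖v‖ := by gcongr; exact hlip _ _
        _ = L * t * ‖v‖ ^ 2 := by
          rw [add_sub_cancel_left, norm_smul, Real.norm_of_nonneg ht]; ring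
    rwa [inner_sub_left, sub_le_iff_le_add'] at this
  have := image_le_of_deriv_right_le_deriv_boundary (a := 0) (b := 1)
    (fun t _ => (hg t).continuousAt.continuousWithinAt) (fun t _ => (hg t).hasDerivWithinAt)
    (by simp [B]) (fun t _ => (hB t).continuousAt.continuousWithinAt)
    (fun t _ => (hB t).hasDerivWithinAt) (fun t ht => bound t ht.1) (right_mem_Icc.2 zero_le_one)
  simpa [B] using this

lemma ConvexOn.add_inner_add_norm_sq_le {β : ℝ} (hβ : 0 < β) (hconv : ConvexOn ℝ univ F)
    (hF : ∀ x, HasGradientAt F (f' x) x) (hlip : ∀ x y, ‖f' x - f' y‖ ≤ 1 / β * ‖x - y‖)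
    (x y : H) :
    F y + ⟪f' y, x - y⟫ + β / 2 * ‖f' x - f' y‖ ^ 2 ≤ F x := by
  set d := f' x - f' y
  have hdescent := apply_add_le_of_lipschitz_gradient hF hlip x (-(β • d))
  have hconvex := hconv.add_inner_sub_le_of_hasGradientAt (hF y) (x + -(β • d))
  have hd : β * ⟪f' x, d⟫ - β * ⟪f' y, d⟫ = β * ‖d‖ ^ 2 := by
    rw [← mul_sub, ← inner_sub_left, real_inner_self_eq_norm_sq]
  rw [inner_neg_right, real_inner_smul_right, norm_neg, norm_smul, Real.norm_of_nonneg hβ.le]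
    at hdescent
  rw [show x + -(β • d) - y = (x - y) - β • d by abel, inner_sub_right,
    real_inner_smul_right] at hconvex
  have hβd : 1 / β / 2 * (β * ‖d‖) ^ 2 = β / 2 * ‖d‖ ^ 2 := by
    field_simp
  linarith

theorem ConvexOn.mul_norm_sq_le_inner_sub {β : ℝ} (hβ : 0 < β) (hconv : ConvexOn ℝ univ F)
    (hF : ∀ x, HasGradientAt F (f' x) x) (hlip : ∀ x y, ‖f' x - f' y‖ ≤ 1 / β * ‖x - y‖)
    (x y : H) :
    β * ‖f' x - f' y‖ ^ 2 ≤ ⟪f' x - f' y, x - y⟫ := by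
  have hxy := hconv.add_inner_add_norm_sq_le hβ hF hlip x y
  have hyx := hconv.add_inner_add_norm_sq_le hβ hF hlip y x
  rw [norm_sub_rev] at hyx
  have : ⟪f' x - f' y, x - y⟫ = -⟪f' x, y - x⟫ - ⟪f' y, x - y⟫ := by
    rw [inner_sub_left, ← neg_sub x y, inner_neg_right]; ring
  linarith

end Gradient

section FirmlyNonexpansive

variable {E : Type*} [NormedAddCommGroup E] [InnerProductSpace ℝ E]

def FirmlyNonexpansive (T : E → E) : Prop :=
  ∀ x y, ‖T x - T y‖ ^ 2 + ‖(x - T x) - (y - T y)‖ ^ 2 ≤ ‖x - y‖ ^ 2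

lemma firmlyNonexpansive_of_norm_sq_le_inner {T : E → E}
    (hT : ∀ x y, ‖T x - T y‖ ^ 2 ≤ ⟪T x - T y, x - y⟫) : FirmlyNonexpansive T := by
  intro x y
  rw [show (x - T x) - (y - T y) = (x - y) - (T x - T y) by abel, norm_sub_sq_real (x - y),
    real_inner_comm]
  linarith [hT x y]

end FirmlyNonexpansive

/-- Baillon–Haddad: if `F` is convex differentiable with `(1/β)`-Lipschitz
gradient `f'`, then `β • f'` is firmly nonexpansive; in particular
`⟪f' x - f' y, x - y⟫ ≥ β ‖f' x - f' y‖²`. -/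
theorem stmt_5 {H : Type*} [NormedAddCommGroup H] [InnerProductSpace ℝ H]
    [CompleteSpace H] (β : ℝ) (hβ : 0 < β) (F : H → ℝ) (f' : H → H)
    (hconv : ConvexOn ℝ Set.univ F)
    (hdiff : ∀ x : H, HasGradientAt F (f' x) x)
    (hlip : ∀ x y : H, ‖f' x - f' y‖ ≤ (1 / β) * ‖x - y‖) :
    (∀ x y : H,
        ‖β • f' x - β • f' y‖ ^ 2
            + ‖(x - β • f' x) - (y - β • f' y)‖ ^ 2 ≤ ‖x - y‖ ^ 2) ∧
      ∀ x y : H, β * ‖f' x - f' y‖ ^ 2 ≤ ⟪f' x - f' y, x - y⟫ := by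
  have hcoco := hconv.mul_norm_sq_le_inner_sub hβ hdiff hlip
  refine ⟨firmlyNonexpansive_of_norm_sq_le_inner (T := β • f') fun x y => ?_, hcoco⟩
  calc ‖(β • f') x - (β • f') y‖ ^ 2 = β * (β * ‖f' x - f' y‖ ^ 2) := by
        rw [Pi.smul_apply, Pi.smul_apply, ← smul_sub, norm_smul, Real.norm_of_nonneg hβ.le]
        ring
    _ ≤ β * ⟪f' x - f' y, x - y⟫ := by gcongr; exact hcoco x y
    _ = ⟪(β • f') x - (β • f') y, x - y⟫ := by
      rw [Pi.smul_apply, Pi.smul_apply, ← smul_sub, real_inner_smul_left]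
end

section
/- o(1/k) rate of Forward–Backward objective: Under the assumptions of the non-relaxed non-stationary Forward–Backward iteration x_{k+1} = prox_{γₖR}(x_k - γₖ∇F(x_k)) with 0 < γ ≤ γₖ ≤ γ̄ < 2β, γₖ → γ, ∑|γₖ - γ| < ∞, and with Argmin(F+R) ≠ ∅, the objective error satisfies Φ(x_k) - Φ(x⋆) = o(1/(k+1)), where Φ = F + R and x⋆ is a minimizer. -/
/-!
Write `Φ = F + R` and `L = 1/β`. The descent lemma for `F`, the gradient inequality of the convex
`F` and the variational inequality characterising the proximal point combine, for every `u`, into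
`γₖ (Φ xₖ₊₁ - Φ u) ≤ ½‖u - xₖ‖² - ½‖u - xₖ₊₁‖² + (γₖL/2 - ½)‖xₖ₊₁ - xₖ‖²`.
With `u = xₖ` this says that `Φ xₖ` decreases, by at least a fixed multiple of `‖xₖ₊₁ - xₖ‖²`
because `γₖ ≤ γup < 2/L`. With `u = x⋆` it then bounds `γlow (Φ xₖ₊₁ - Φ x⋆)` by the decrement of
`½‖x⋆ - xₖ‖² + c (Φ xₖ - Φ x⋆)`, so the gaps are summable. Finally a nonnegative, nonincreasing,
summable sequence is `o(1/k)`: `(k + 1) aₖ ≤ 2 ∑_{k/2 ≤ i ≤ k} aᵢ`, which is bounded by a tail of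
the series.
-/

open Filter Topology RealInnerProductSpace

/-- `p` is the proximal point `prox_{γR}(y)`, i.e. the minimizer of
`u ↦ γ R u + ½‖u - y‖²`. -/
def IsProx {H : Type*} [NormedAddCommGroup H] [InnerProductSpace ℝ H]
    (R : H → ℝ) (γ : ℝ) (y p : H) : Prop :=
  IsMinOn (fun u : H => γ * R u + (1 / 2) * ‖u - y‖ ^ 2) Set.univ p

theorem summable_of_le_sub_succ {u v : ℕ → ℝ} (hu : ∀ k, 0 ≤ u k) (hv : ∀ k, 0 ≤ v k)
    (h : ∀ k, u k ≤ v k - v (k + 1)) : Summable u :=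
  summable_of_sum_range_le hu fun n =>
    (Finset.sum_le_sum fun k _ => h k).trans (by rw [Finset.sum_range_sub']; linarith [hv n])

theorem tendsto_succ_mul_of_antitone_of_summable {a : ℕ → ℝ} (ha : ∀ k, 0 ≤ a k)
    (hanti : Antitone a) (hsum : Summable a) :
    Tendsto (fun k : ℕ => ((k : ℝ) + 1) * a k) atTop (𝓝 0) := by
  have htail : Tendsto (fun k => 2 * ∑' i, a (i + k / 2)) atTop (𝓝 0) := by
    simpa using ((tendsto_sum_nat_add a).comp (Nat.tendsto_div_const_atTop two_ne_zero)).const_mul 2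
  refine squeeze_zero (fun k => mul_nonneg (by positivity) (ha k)) (fun k => ?_) htail
  set m := k + 1 - k / 2
  have hcard : ((k : ℝ) + 1) ≤ 2 * m := by
    have : k + 1 ≤ 2 * m := by omega
    exact_mod_cast this
  have hblock : (m : ℝ) * a k ≤ ∑ i ∈ Finset.range m, a (i + k / 2) := by
    simpa using Finset.card_nsmul_le_sum (Finset.range m) (fun i => a (i + k / 2)) (a k)
      fun i hi => hanti (by simp only [Finset.mem_range] at hi; omega)
  have htsum : ∑ i ∈ Finset.range m, a (i + k / 2) ≤ ∑' i, a (i + k / 2) :=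
    ((summable_nat_add_iff (k / 2)).2 hsum).sum_le_tsum _ fun i _ => ha _
  calc ((k : ℝ) + 1) * a k ≤ 2 * (m * a k) := by nlinarith [ha k]
    _ ≤ 2 * ∑' i, a (i + k / 2) := by linarith

theorem nonneg_of_forall_Ioc_nonneg_add_mul {c d : ℝ}
    (h : ∀ t ∈ Set.Ioc (0 : ℝ) 1, 0 ≤ c + t * d) : 0 ≤ c := by
  have hlim : Tendsto (fun t : ℝ => c + t * d) (𝓝[>] 0) (𝓝 c) := by
    have : Continuous fun t : ℝ => c + t * d := by fun_prop
    simpa using (this.tendsto 0).mono_left nhdsWithin_le_nhds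
  exact ge_of_tendsto hlim (eventually_of_mem (Ioc_mem_nhdsGT zero_lt_one) h)

section Smooth

variable {H : Type*} [NormedAddCommGroup H] [InnerProductSpace ℝ H] [CompleteSpace H]
  {F : H → ℝ}

theorem HasGradientAt.hasDerivAt_add_smul {x v g : H} {t : ℝ}
    (hF : HasGradientAt F g (x + t • v)) :
    HasDerivAt (fun s : ℝ => F (x + s • v)) ⟪g, v⟫ t := by
  have hline : HasDerivAt (fun s : ℝ => x + s • v) v t := by
    simpa using ((hasDerivAt_id t).smul_const v).const_add x
  simpa [Function.comp_def] using hF.hasFDerivAt.comp_hasDerivAt t hline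

theorem ConvexOn.add_inner_le_of_hasGradientAt (hFconv : ConvexOn ℝ Set.univ F) {x g : H}
    (hF : HasGradientAt F g x) (u : H) :
    F x + ⟪g, u - x⟫ ≤ F u := by
  have hconv : ConvexOn ℝ Set.univ (fun t : ℝ => F (x + t • (u - x))) := by
    simpa [Function.comp_def, AffineMap.lineMap_apply, add_comm]
      using hFconv.comp_affineMap (AffineMap.lineMap x u)
  have hderiv := hconv.le_slope_of_hasDerivAt (Set.mem_univ 0) (Set.mem_univ 1) one_pos
    (HasGradientAt.hasDerivAt_add_smul (by simpa using hF))
  simp only [slope_def_field, zero_smul, one_smul, add_zero, add_sub_cancel, sub_zero,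
    div_one] at hderiv
  linarith

theorem le_add_inner_add_sq_of_lipschitz_gradient {f' : H → H}
    (hF : ∀ x, HasGradientAt F (f' x) x) {L : ℝ} (hlip : ∀ x y, ‖f' x - f' y‖ ≤ L * ‖x - y‖)
    (x p : H) :
    F p ≤ F x + ⟪f' x, p - x⟫ + L / 2 * ‖p - x‖ ^ 2 := by
  set v := p - x
  set φ : ℝ → ℝ := fun t => F (x + t • v) - t * ⟪f' x, v⟫ - L / 2 * t ^ 2 * ‖v‖ ^ 2
  have hφ : ∀ t, HasDerivAt φ (⟪f' (x + t • v) - f' x, v⟫ - L * t * ‖v‖ ^ 2) t := by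
    intro t
    have := (((hF (x + t • v)).hasDerivAt_add_smul (x := x) (v := v)).sub
      ((hasDerivAt_id t).mul_const ⟪f' x, v⟫)).sub
        (((hasDerivAt_pow 2 t).const_mul (L / 2)).mul_const (‖v‖ ^ 2))
    exact this.congr_deriv (by rw [inner_sub_left]; ring)
  have hanti : AntitoneOn φ (Set.Ici 0) := by
    refine antitoneOn_of_hasDerivWithinAt_nonpos (convex_Ici 0)
      (fun t _ => (hφ t).continuousAt.continuousWithinAt) (fun t _ => (hφ t).hasDerivWithinAt) ?_
    intro t ht
    rw [interior_Ici, Set.mem_Ioi] at ht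
    calc ⟪f' (x + t • v) - f' x, v⟫ - L * t * ‖v‖ ^ 2
        ≤ ‖f' (x + t • v) - f' x‖ * ‖v‖ - L * t * ‖v‖ ^ 2 := by gcongr; exact real_inner_le_norm _ _
      _ ≤ L * ‖t • v‖ * ‖v‖ - L * t * ‖v‖ ^ 2 := by
          gcongr; simpa using hlip (x + t • v) x
      _ = 0 := by rw [norm_smul, Real.norm_of_nonneg ht.le]; ring
  have h01 : φ 1 ≤ φ 0 := hanti (Set.mem_Ici.2 le_rfl) (Set.mem_Ici.2 zero_le_one) zero_le_one
  simp only [φ, v, zero_smul, one_smul, add_zero, add_sub_cancel, zero_mul, one_mul, mul_one,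
    one_pow, sub_zero, ne_eq, OfNat.ofNat_ne_zero, not_false_eq_true, zero_pow, mul_zero] at h01
  linarith

end Smooth

section Prox

variable {H : Type*} [NormedAddCommGroup H] [InnerProductSpace ℝ H] {R : H → ℝ}

theorem IsProx.le_add_inner (hR : ConvexOn ℝ Set.univ R) {γ : ℝ} (hγ : 0 ≤ γ) {y p : H}
    (hp : IsProx R γ y p) (u : H) :
    γ * R p ≤ γ * R u + ⟪p - y, u - p⟫ := by
  suffices 0 ≤ γ * R u - γ * R p + ⟪p - y, u - p⟫ by linarith
  refine nonneg_of_forall_Ioc_nonneg_add_mul (d := 1 / 2 * ‖u - p‖ ^ 2) fun t ht => ?_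
  have hmin : γ * R p + 1 / 2 * ‖p - y‖ ^ 2 ≤
      γ * R (p + t • (u - p)) + 1 / 2 * ‖p + t • (u - p) - y‖ ^ 2 :=
    hp (Set.mem_univ _)
  have hRt : R (p + t • (u - p)) ≤ (1 - t) * R p + t * R u := by
    have := hR.2 (Set.mem_univ p) (Set.mem_univ u) (sub_nonneg.2 ht.2) ht.1.le (by ring)
    rwa [show (1 - t) • p + t • u = p + t • (u - p) by module] at this
  have hnorm : ‖p + t • (u - p) - y‖ ^ 2 =
      ‖p - y‖ ^ 2 + 2 * t * ⟪p - y, u - p⟫ + t ^ 2 * ‖u - p‖ ^ 2 := by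
    rw [show p + t • (u - p) - y = (p - y) + t • (u - p) by abel, norm_add_sq_real,
      real_inner_smul_right, norm_smul, mul_pow, Real.norm_eq_abs, sq_abs]
    ring
  have hγRt := mul_le_mul_of_nonneg_left hRt hγ
  have : 0 ≤ t * (γ * R u - γ * R p + ⟪p - y, u - p⟫ + t * (1 / 2 * ‖u - p‖ ^ 2)) := by
    nlinarith
  exact nonneg_of_mul_nonneg_right this ht.1

end Prox

section ForwardBackward

variable {H : Type*} [NormedAddCommGroup H] [InnerProductSpace ℝ H] [CompleteSpace H]
  {F R : H → ℝ} {f' : H → H} {L : ℝ}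

theorem IsProx.forwardBackward_le (hFconv : ConvexOn ℝ Set.univ F)
    (hF : ∀ x, HasGradientAt F (f' x) x) (hlip : ∀ x y, ‖f' x - f' y‖ ≤ L * ‖x - y‖)
    (hR : ConvexOn ℝ Set.univ R) {γ : ℝ} (hγ : 0 ≤ γ) {x p : H}
    (hp : IsProx R γ (x - γ • f' x) p) (u : H) :
    γ * ((F p + R p) - (F u + R u)) ≤
      1 / 2 * ‖u - x‖ ^ 2 - 1 / 2 * ‖u - p‖ ^ 2 + (γ * L / 2 - 1 / 2) * ‖p - x‖ ^ 2 := by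
  have hdescent := le_add_inner_add_sq_of_lipschitz_gradient hF hlip x p
  have hgrad := hFconv.add_inner_le_of_hasGradientAt (hF x) u
  have hprox := hp.le_add_inner hR hγ u
  have hthree : ‖u - x‖ ^ 2 = ‖u - p‖ ^ 2 + 2 * ⟪p - x, u - p⟫ + ‖p - x‖ ^ 2 := by
    rw [real_inner_comm, ← norm_add_sq_real, sub_add_sub_cancel]
  rw [show p - (x - γ • f' x) = (p - x) + γ • f' x by abel, inner_add_left,
    real_inner_smul_left] at hprox
  have hsplit : ⟪f' x, u - x⟫ = ⟪f' x, u - p⟫ + ⟪f' x, p - x⟫ := by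
    rw [← inner_add_right, sub_add_sub_cancel]
  linear_combination γ * hdescent + γ * hgrad + hprox - 1 / 2 * hthree - γ * hsplit

theorem IsProx.forwardBackward_sufficient_decrease (hFconv : ConvexOn ℝ Set.univ F)
    (hF : ∀ x, HasGradientAt F (f' x) x) (hlip : ∀ x y, ‖f' x - f' y‖ ≤ L * ‖x - y‖)
    (hR : ConvexOn ℝ Set.univ R) {γ : ℝ} (hγ : 0 ≤ γ) {x p : H}
    (hp : IsProx R γ (x - γ • f' x) p) :
    (1 - γ * L / 2) * ‖p - x‖ ^ 2 ≤ γ * ((F x + R x) - (F p + R p)) := by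
  have := hp.forwardBackward_le hFconv hF hlip hR hγ x
  rw [sub_self, norm_zero, norm_sub_rev x p] at this
  linarith

variable {γ : ℕ → ℝ} {x : ℕ → H}

theorem forwardBackward_objective_antitone (hFconv : ConvexOn ℝ Set.univ F)
    (hF : ∀ x, HasGradientAt F (f' x) x) (hlip : ∀ x y, ‖f' x - f' y‖ ≤ L * ‖x - y‖)
    (hR : ConvexOn ℝ Set.univ R) (hγ : ∀ k, 0 < γ k ∧ γ k * L ≤ 2)
    (hx : ∀ k, IsProx R (γ k) (x k - γ k • f' (x k)) (x (k + 1))) :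
    Antitone fun k => F (x k) + R (x k) := by
  refine antitone_nat_of_succ_le fun k => ?_
  have hdecr := (hx k).forwardBackward_sufficient_decrease hFconv hF hlip hR (hγ k).1.le
  have : 0 ≤ (1 - γ k * L / 2) * ‖x (k + 1) - x k‖ ^ 2 :=
    mul_nonneg (by linarith [(hγ k).2]) (sq_nonneg _)
  exact sub_nonneg.1 (nonneg_of_mul_nonneg_right (this.trans hdecr) (hγ k).1)

theorem forwardBackward_summable_objective_sub (hFconv : ConvexOn ℝ Set.univ F)
    (hF : ∀ x, HasGradientAt F (f' x) x) (hlip : ∀ x y, ‖f' x - f' y‖ ≤ L * ‖x - y‖)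
    (hL : 0 ≤ L) (hR : ConvexOn ℝ Set.univ R) {γlow γup : ℝ} (hlow : 0 < γlow)
    (hup : γup * L < 2) (hγ : ∀ k, γlow ≤ γ k ∧ γ k ≤ γup) {xstar : H}
    (hmin : IsMinOn (fun x => F x + R x) Set.univ xstar)
    (hx : ∀ k, IsProx R (γ k) (x k - γ k • f' (x k)) (x (k + 1))) :
    Summable fun k => (F (x k) + R (x k)) - (F xstar + R xstar) := by
  set a : ℕ → ℝ := fun k => (F (x k) + R (x k)) - (F xstar + R xstar)
  set δ := 1 - γup * L / 2 with hδdef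
  have hδ : 0 < δ := by linarith
  have hγpos k : 0 < γ k := hlow.trans_le (hγ k).1
  have hγL k : γ k * L ≤ γup * L := mul_le_mul_of_nonneg_right (hγ k).2 hL
  have ha k : 0 ≤ a k := sub_nonneg.2 (hmin (Set.mem_univ (x k)))
  have hanti : Antitone a := fun i j hij => sub_le_sub_right
    (forwardBackward_objective_antitone hFconv hF hlip hR
      (fun k => ⟨hγpos k, (hγL k).trans hup.le⟩) hx hij) _
  have hdecr k : δ * ‖x (k + 1) - x k‖ ^ 2 ≤ γup * (a k - a (k + 1)) := by
    have h := (hx k).forwardBackward_sufficient_decrease hFconv hF hlip hR (hγpos k).le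
    have hgap : 0 ≤ a k - a (k + 1) := sub_nonneg.2 (hanti k.le_succ)
    calc δ * ‖x (k + 1) - x k‖ ^ 2 ≤ (1 - γ k * L / 2) * ‖x (k + 1) - x k‖ ^ 2 := by
          gcongr; linarith [hγL k, hδdef]
      _ ≤ γ k * (a k - a (k + 1)) := by simp only [a]; linarith
      _ ≤ γup * (a k - a (k + 1)) := by gcongr; exact (hγ k).2
  set v : ℕ → ℝ := fun k => 1 / 2 * ‖xstar - x k‖ ^ 2 + γup / (2 * δ) * a k
  have hv k : 0 ≤ v k := by
    have : 0 ≤ γup := (hlow.trans_le (hγ 0).1).le.trans (hγ 0).2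
    exact add_nonneg (by positivity) (mul_nonneg (by positivity) (ha k))
  have hstep k : γlow * a (k + 1) ≤ v k - v (k + 1) := by
    have h := (hx k).forwardBackward_le hFconv hF hlip hR (hγpos k).le xstar
    have h1 : γlow * a (k + 1) ≤ γ k * a (k + 1) := by gcongr; exacts [ha _, (hγ k).1]
    have h2 : (γ k * L / 2 - 1 / 2) * ‖x (k + 1) - x k‖ ^ 2 ≤ 1 / 2 * ‖x (k + 1) - x k‖ ^ 2 := by
      gcongr; linarith [hγL k]
    have h3 : 1 / 2 * ‖x (k + 1) - x k‖ ^ 2 ≤ γup / (2 * δ) * (a k - a (k + 1)) := by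
      rw [div_mul_eq_mul_div γup, le_div_iff₀ (by positivity)]; linarith [hdecr k]
    simp only [v, a] at h1 h3 ⊢
    linarith
  have := summable_of_le_sub_succ (fun k => mul_nonneg hlow.le (ha (k + 1))) hv hstep
  exact (summable_nat_add_iff 1).1 ((summable_mul_left_iff hlow.ne').1 this)

end ForwardBackward

theorem stmt_16_general {H : Type*} [NormedAddCommGroup H] [InnerProductSpace ℝ H]
    [CompleteSpace H] (β : ℝ) (hβ : 0 < β)
    (F : H → ℝ) (f' : H → H)
    (hFconv : ConvexOn ℝ Set.univ F)
    (hdiff : ∀ x : H, HasGradientAt F (f' x) x)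
    (hlip : ∀ x y : H, ‖f' x - f' y‖ ≤ (1 / β) * ‖x - y‖)
    (R : H → ℝ) (hRconv : ConvexOn ℝ Set.univ R)
    (γ : ℕ → ℝ) (γlow γup : ℝ)
    (hlow : 0 < γlow) (hup : γup < 2 * β)
    (hγ : ∀ k, γlow ≤ γ k ∧ γ k ≤ γup)
    (xstar : H) (hmin : IsMinOn (fun x : H => F x + R x) Set.univ xstar)
    (x : ℕ → H)
    (hx : ∀ k : ℕ, IsProx R (γ k) (x k - γ k • f' (x k)) (x (k + 1))) :
    Tendsto
      (fun k : ℕ => ((k : ℝ) + 1) * ((F (x k) + R (x k)) - (F xstar + R xstar)))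
      atTop (𝓝 0) := by
  have hL : 0 ≤ 1 / β := by positivity
  have hupL : γup * (1 / β) < 2 := by rwa [mul_one_div, div_lt_iff₀ hβ]
  have hγL k : 0 < γ k ∧ γ k * (1 / β) ≤ 2 :=
    ⟨hlow.trans_le (hγ k).1, (mul_le_mul_of_nonneg_right (hγ k).2 hL).trans hupL.le⟩
  refine tendsto_succ_mul_of_antitone_of_summable (fun k => sub_nonneg.2 (hmin (Set.mem_univ _)))
    ?_ (forwardBackward_summable_objective_sub hFconv hdiff hlip hL hRconv hlow hupL hγ hmin hx)
  exact fun i j hij =>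
    sub_le_sub_right (forwardBackward_objective_antitone hFconv hdiff hlip hRconv hγL hx hij) _

/-- `o(1/k)` rate of the Forward–Backward objective: for the non-relaxed,
non-stationary iteration `x_{k+1} = prox_{γₖR}(x_k - γₖ ∇F(x_k))` with
`0 < γlow ≤ γₖ ≤ γup < 2β`, `γₖ → γ∞`, `∑ |γₖ - γ∞| < ∞` and a minimizer
`xstar` of `Φ = F + R`, one has `(k+1)(Φ(x_k) - Φ(xstar)) → 0`. -/
theorem stmt_16 {H : Type*} [NormedAddCommGroup H] [InnerProductSpace ℝ H]
    [CompleteSpace H] (β : ℝ) (hβ : 0 < β)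
    (F : H → ℝ) (f' : H → H)
    (hFconv : ConvexOn ℝ Set.univ F)
    (hdiff : ∀ x : H, HasGradientAt F (f' x) x)
    (hlip : ∀ x y : H, ‖f' x - f' y‖ ≤ (1 / β) * ‖x - y‖)
    (R : H → ℝ) (hRconv : ConvexOn ℝ Set.univ R)
    (hRlsc : LowerSemicontinuous R)
    (γ : ℕ → ℝ) (γlow γup γinf : ℝ)
    (hlow : 0 < γlow) (hup : γup < 2 * β)
    (hγ : ∀ k, γlow ≤ γ k ∧ γ k ≤ γup)
    (hγlim : Tendsto γ atTop (𝓝 γinf))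
    (hγsum : Summable (fun k => |γ k - γinf|))
    (xstar : H) (hmin : IsMinOn (fun x : H => F x + R x) Set.univ xstar)
    (x : ℕ → H)
    (hx : ∀ k : ℕ, IsProx R (γ k) (x k - γ k • f' (x k)) (x (k + 1))) :
    Tendsto
      (fun k : ℕ => ((k : ℝ) + 1) * ((F (x k) + R (x k)) - (F xstar + R xstar)))
      atTop (𝓝 0) :=
  stmt_16_general β hβ F f' hFconv hdiff hlip R hRconv γ γlow γup hlow hup hγ xstar hmin x hx
end
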